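/- Let M be a countable structure satisfying Hypothesis (H), let L be a finite group, and let H ∈ PS(M). Then the following are equivalent: (1) H = G_(K) for some K ∈ A(M) with Aut(K) ≅ L; (2) there is H' ∈ GS(M) such that H ⊴ H', [H' : H] < ω, H' is maximal among subgroups in GS(M) with these two properties, and H'/H ≅ L. -/

import Mathlib

open FirstOrder

namespace Paper

variable (L : FirstOrder.Language) (M : Type*) [L.Structure M]

/-- The group of automorphisms of a first-order structure, with composition. -/
instance autGroup : Group (M ≃[L] M) where
  one := FirstOrder.Language.Equiv.refl L M
  mul f g := f.comp g
  inv := FirstOrder.Language.Equiv.symm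
  mul_assoc _ _ _ := rfl
  one_mul f := FirstOrder.Language.Equiv.ext fun a => by
    show (FirstOrder.Language.Equiv.refl L M).comp f a = f a; simp
  mul_one f := FirstOrder.Language.Equiv.ext fun a => by
    show f.comp (FirstOrder.Language.Equiv.refl L M) a = f a; simp
  inv_mul_cancel f := FirstOrder.Language.Equiv.ext fun a => by
    show f.symm.comp f a = FirstOrder.Language.Equiv.refl L M a; simp

@[simp] theorem aut_one_apply (a : M) : (1 : M ≃[L] M) a = a := by
  show FirstOrder.Language.Equiv.refl L M a = a; simp
@[simp] theorem aut_mul_apply (f g : M ≃[L] M) (a : M) : (f * g) a = f (g a) := rfl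
@[simp] theorem aut_inv_apply (f : M ≃[L] M) (a : M) : f⁻¹ a = f.symm a := rfl
@[simp] theorem aut_coe_mul (f g : M ≃[L] M) : ⇑(f * g) = ⇑f ∘ ⇑g := rfl

/-- The natural action of the automorphism group on the structure. -/
instance autAction : MulAction (M ≃[L] M) M where
  smul f a := f a
  one_smul _ := rfl
  mul_smul _ _ _ := rfl

@[simp] theorem aut_smul_def (f : M ≃[L] M) (a : M) : f • a = f a := rfl

/-- The topology of pointwise convergence on the automorphism group (the domain
being regarded as discrete). -/
instance autTopology : TopologicalSpace (M ≃[L] M) :=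
  letI : TopologicalSpace M := ⊥
  TopologicalSpace.induced (fun g => (g : M → M)) Pi.topologicalSpace

/-- The pointwise stabilizer `G_(A)` of a set `A ⊆ M` in `Aut(M)`. -/
def pstab (A : Set M) : Subgroup (M ≃[L] M) where
  carrier := {g | ∀ a ∈ A, g a = a}
  one_mem' := fun _ _ => rfl
  mul_mem' := by
    intro f g hf hg a ha
    simp only [Set.mem_setOf_eq] at *
    rw [aut_mul_apply, hg a ha, hf a ha]
  inv_mem' := by
    intro f hf a ha
    simp only [Set.mem_setOf_eq] at *
    rw [aut_inv_apply]
    conv_lhs => rw [← hf a ha]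
    exact f.symm_apply_apply a

/-- The setwise stabilizer `G_{A}` of a set `A ⊆ M` in `Aut(M)`. -/
def sstab (A : Set M) : Subgroup (M ≃[L] M) where
  carrier := {g | g '' A = A}
  one_mem' := by
    simp only [Set.mem_setOf_eq]
    ext a; simp [Set.mem_image]
  mul_mem' := by
    intro f g hf hg
    simp only [Set.mem_setOf_eq] at *
    rw [aut_coe_mul, Set.image_comp, hg, hf]
  inv_mem' := by
    intro f hf
    simp only [Set.mem_setOf_eq] at *
    conv_lhs => rw [← hf]
    rw [Set.image_image]
    ext a; constructor
    · rintro ⟨x, hx, rfl⟩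
      simpa [f.symm_apply_apply] using hx
    · intro ha
      exact ⟨a, ha, f.symm_apply_apply a⟩

/-- The Galois-algebraic closure of `A ⊆ M`: the set of elements with finite orbit
under the pointwise stabilizer of `A`. -/
def aclg (A : Set M) : Set M :=
  {b | (MulAction.orbit (pstab L M A) b).Finite}

/-- The Galois-definable closure of the empty set: elements fixed by every automorphism. -/
def dclg0 : Set M := {b | ∀ g : M ≃[L] M, g b = b}

/-- `p : K ≃ K'` is an isomorphism between the induced substructures on `K` and `K'`. -/
def IsPartialIso (K K' : Set M) (p : K ≃ K') : Prop :=
  (∀ {n : ℕ} (f : L.Functions n) (x : Fin n → K),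
      ∃ h : FirstOrder.Language.Structure.funMap f (fun i => (x i : M)) ∈ K,
        (p ⟨FirstOrder.Language.Structure.funMap f (fun i => (x i : M)), h⟩ : M) =
          FirstOrder.Language.Structure.funMap f (fun i => (p (x i) : M))) ∧
  (∀ {n : ℕ} (r : L.Relations n) (x : Fin n → K),
      FirstOrder.Language.Structure.RelMap r (fun i => (x i : M)) ↔
        FirstOrder.Language.Structure.RelMap r (fun i => (p (x i) : M)))

/-- `A(M)`: the collection of Galois-algebraic closures of finite subsets of `M`. -/
def AA : Set (Set M) := {K | ∃ A : Set M, A.Finite ∧ K = aclg L M A}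

/-- Hypothesis (H). -/
structure HypH : Prop where
  countable : Countable M
  locallyFinite : ∀ A : Set M, A.Finite → (aclg L M A).Finite
  extendsIso : ∀ (K K' : Set M), K.Finite → K'.Finite →
    aclg L M K = K → aclg L M K' = K' → ∀ p : K ≃ K', IsPartialIso L M K K' p →
      ∃ g : M ≃[L] M, ∀ a : K, g a = (p a : M)
  openSandwich : ∀ H : Subgroup (M ≃[L] M), IsOpen (H : Set (M ≃[L] M)) →
    ∃! K : Set M, K.Finite ∧ aclg L M K = K ∧ pstab L M K ≤ H ∧ H ≤ sstab L M K


/-- Generalized pointwise stabilizer `G_(K,L)`. -/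
def genStab (K : Set M) (Lsub : Subgroup (Equiv.Perm K)) : Subgroup (M ≃[L] M) where
  carrier := {f | ∃ p ∈ Lsub, ∀ a : K, f a = (p a : M)}
  one_mem' := ⟨1, Lsub.one_mem, fun a => by simp⟩
  mul_mem' := by
    rintro f g ⟨p, hp, hfp⟩ ⟨q, hq, hgq⟩
    refine ⟨p * q, Lsub.mul_mem hp hq, fun a => ?_⟩
    rw [aut_mul_apply, hgq a, hfp (q a)]
    rfl
  inv_mem' := by
    rintro f ⟨p, hp, hfp⟩
    refine ⟨p⁻¹, Lsub.inv_mem hp, fun a => ?_⟩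
    have h1 : f ((p⁻¹ a : K) : M) = ((p (p⁻¹ a) : K) : M) := hfp _
    rw [show p (p⁻¹ a) = a from Equiv.Perm.eq_inv_iff_eq.mp rfl] at h1
    rw [aut_inv_apply, ← h1, FirstOrder.Language.Equiv.symm_apply_apply]

/-- `GS(M)`: the collection of generalized pointwise stabilizers. -/
def GS : Set (Subgroup (M ≃[L] M)) :=
  {H | ∃ K ∈ AA L M, ∃ Lsub : Subgroup (Equiv.Perm K),
    (∀ p ∈ Lsub, IsPartialIso L M K K (p : K ≃ K)) ∧ H = genStab L M K Lsub}

/-- `PS(M)`: the collection of pointwise stabilizers of members of `A(M)`. -/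
def PS : Set (Subgroup (M ≃[L] M)) := {H | ∃ K ∈ AA L M, H = pstab L M K}

/-- The lattice `A₊(M)`. -/
def Aplus : Set (Set M) := AA L M ∪ {dclg0 L M}

/-- Covering relation in `S`. -/
def hasseCovers {α : Type*} (S : Set (Set α)) (A B : Set α) : Prop :=
  A ∈ S ∧ B ∈ S ∧ A ⊂ B ∧ ¬∃ C ∈ S, A ⊂ C ∧ C ⊂ B

/-- Adjacency in the Hasse diagram of `S`. -/
def hasseAdj {α : Type*} (S : Set (Set α)) (A B : Set α) : Prop :=
  hasseCovers S A B ∨ hasseCovers S B A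

/-- `A_k(M)`: members of `A(M)` distinct from `dcl(∅)` at distance `≤ k` from the bottom
of the lattice `A₊(M)` in its Hasse diagram. -/
def Ak (k : ℕ) : Set (Set M) :=
  {K | K ∈ AA L M ∧ K ≠ dclg0 L M ∧ ∃ (j : ℕ) (c : Fin (j + 1) → Set M), j ≤ k ∧
    c 0 = dclg0 L M ∧ c (Fin.last j) = K ∧
    ∀ i : Fin j, hasseAdj (Aplus L M) (c i.castSucc) (c i.succ)}

/-- `A_k(M)` for `k ≤ ω`, with `A_ω(M) = A(M)`. -/
def AkE (k : ℕ∞) : Set (Set M) :=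
  match k with
  | ⊤ => AA L M
  | (k : ℕ) => Ak L M k

/-- `k_M`: the supremum of lengths of strict chains of Galois-algebraic closures of
singletons. -/
noncomputable def kM : ℕ∞ :=
  ⨆ k ∈ {k : ℕ | ∃ a : Fin k → M, ∀ i j : Fin k, i < j → aclg L M {a i} ⊂ aclg L M {a j}},
    (k : ℕ∞)

/-- The domain of the expanded structure `E^ex_M(k)`: triples `(K, p, K')` with
`K, K' ∈ A_k(M)` and `p : K ≅ K'`. -/
structure ExTriple (k : ℕ∞) where
  K : Set M
  K' : Set M
  hK : K ∈ AkE L M k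
  hK' : K' ∈ AkE L M k
  p : K ≃ K'
  iso : IsPartialIso L M K K' p

/-- The unary predicate of `E^ex_M(k)` holding of the identity triples. -/
def IsIdTriple {k : ℕ∞} (t : ExTriple L M k) : Prop :=
  t.K = t.K' ∧ ∀ a : t.K, (t.p a : M) = (a : M)

/-- The `n`-ary relation `E_n` of `E^ex_M(k)`. -/
def ERel {k : ℕ∞} {n : ℕ} (x : Fin n → ExTriple L M k) : Prop :=
  ∃ g : M ≃[L] M, ∀ (i : Fin n) (a : (x i).K), g a = ((x i).p a : M)

/-- The binary relation `Dom` of `E^ex_M(k)`. -/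
def DomRel {k : ℕ∞} (t s : ExTriple L M k) : Prop := IsIdTriple L M s ∧ s.K = t.K

/-- The binary relation `Cod` of `E^ex_M(k)`. -/
def CodRel {k : ℕ∞} (t s : ExTriple L M k) : Prop := IsIdTriple L M s ∧ s.K = t.K'

variable {L M}

/-- A bijection between the domains of `E^ex_M(k)` and `E^ex_N(k)` is an isomorphism
if it preserves the identity-triple predicate, all the relations `E_n`, `Dom` and `Cod`. -/
def IsExIso {L' : FirstOrder.Language} {N : Type*} [L'.Structure N] {k : ℕ∞}
    (F : ExTriple L M k ≃ ExTriple L' N k) : Prop :=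
  (∀ t, IsIdTriple L M t ↔ IsIdTriple L' N (F t)) ∧
  (∀ (n : ℕ) (x : Fin n → ExTriple L M k), ERel L M x ↔ ERel L' N (F ∘ x)) ∧
  (∀ t s, DomRel L M t s ↔ DomRel L' N (F t) (F s)) ∧
  (∀ t s, CodRel L M t s ↔ CodRel L' N (F t) (F s))

variable (L M)

/-- The automorphism group of the expanded structure `E^ex_M(k)`. -/
def exAut (k : ℕ∞) : Subgroup (Equiv.Perm (ExTriple L M k)) where
  carrier := {σ | IsExIso (σ : ExTriple L M k ≃ ExTriple L M k)}
  one_mem' := by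
    refine ⟨fun t => ?_, fun n x => ?_, fun t s => ?_, fun t s => ?_⟩ <;>
      simp [Equiv.Perm.coe_one, Function.comp_def]
  mul_mem' := by
    rintro σ τ ⟨hσ1, hσ2, hσ3, hσ4⟩ ⟨hτ1, hτ2, hτ3, hτ4⟩
    refine ⟨fun t => ?_, fun n x => ?_, fun t s => ?_, fun t s => ?_⟩
    · exact (hτ1 t).trans (hσ1 (τ t))
    · exact (hτ2 n x).trans (hσ2 n (τ ∘ x))
    · exact (hτ3 t s).trans (hσ3 (τ t) (τ s))
    · exact (hτ4 t s).trans (hσ4 (τ t) (τ s))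
  inv_mem' := by
    rintro σ ⟨hσ1, hσ2, hσ3, hσ4⟩
    refine ⟨fun t => ?_, fun n x => ?_, fun t s => ?_, fun t s => ?_⟩
    · have := hσ1 (σ⁻¹ t); simpa using this.symm
    · have := hσ2 n (⇑(σ⁻¹) ∘ x)
      have hx : ⇑σ ∘ ⇑(σ⁻¹) ∘ x = x := by
        funext i; simp
      rw [hx] at this
      exact this.symm
    · have := hσ3 (σ⁻¹ t) (σ⁻¹ s); simpa using this.symm
    · have := hσ4 (σ⁻¹ t) (σ⁻¹ s); simpa using this.symm

/-- The subgroup of topological automorphisms of a topological group. -/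
def topMulAut (G : Type*) [Group G] [TopologicalSpace G] : Subgroup (MulAut G) where
  carrier := {α | Continuous (α : G → G) ∧ Continuous (α.symm : G → G)}
  one_mem' := ⟨continuous_id, continuous_id⟩
  mul_mem' := by
    rintro α β ⟨hα1, hα2⟩ ⟨hβ1, hβ2⟩
    exact ⟨hα1.comp hβ1, hβ2.comp hα2⟩
  inv_mem' := by
    rintro α ⟨h1, h2⟩
    exact ⟨h2, h1⟩

/-- A group isomorphism between topological groups which is a homeomorphism. -/
def IsTopIso {G H : Type*} [Group G] [Group H] [TopologicalSpace G] [TopologicalSpace H]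
    (e : G ≃* H) : Prop :=
  Continuous (e : G → H) ∧ Continuous (e.symm : H → G)

/-- The natural homomorphism from `Aut(M)` to the symmetric group on `M`. -/
def toPerm : (M ≃[L] M) →* Equiv.Perm M where
  toFun g := g.toEquiv
  map_one' := rfl
  map_mul' f g := Equiv.ext fun _ => rfl

/-- The orbit equivalence relation on `n`-tuples. -/
def orbRel (n : ℕ) (x y : Fin n → M) : Prop := ∃ g : M ≃[L] M, ∀ i, g (x i) = y i

/-- The automorphism group of the orbital structure `E_M`: permutations of `M`
preserving each orbit equivalence relation. -/
def autOrbital : Subgroup (Equiv.Perm M) where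
  carrier := {f | ∀ (n : ℕ) (x y : Fin n → M),
    orbRel L M n x y ↔ orbRel L M n (f ∘ x) (f ∘ y)}
  one_mem' := by intro n x y; simp [Equiv.Perm.coe_one]
  mul_mem' := by
    intro f g hf hg n x y
    exact (hg n x y).trans (hf n (g ∘ x) (g ∘ y))
  inv_mem' := by
    intro f hf n x y
    have := hf n (⇑(f⁻¹) ∘ x) (⇑(f⁻¹) ∘ y)
    have hx : ⇑f ∘ ⇑(f⁻¹) ∘ x = x := by funext i; simp
    have hy : ⇑f ∘ ⇑(f⁻¹) ∘ y = y := by funext i; simp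
    rw [hx, hy] at this
    exact this.symm

/-- `Aut°(E_M)`: automorphisms of the orbital structure preserving each orbit
equivalence class. -/
def autOrbitalFix : Subgroup (Equiv.Perm M) where
  carrier := {f | f ∈ autOrbital L M ∧ ∀ (n : ℕ) (x : Fin n → M), orbRel L M n x (f ∘ x)}
  one_mem' := ⟨(autOrbital L M).one_mem, fun n x => ⟨1, fun i => by simp [Equiv.Perm.coe_one]⟩⟩
  mul_mem' := by
    rintro f g ⟨hf, hf2⟩ ⟨hg, hg2⟩
    refine ⟨(autOrbital L M).mul_mem hf hg, fun n x => ?_⟩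
    obtain ⟨a, ha⟩ := hg2 n x
    obtain ⟨b, hb⟩ := hf2 n (g ∘ x)
    exact ⟨b * a, fun i => by rw [aut_mul_apply, ha i, hb i]; rfl⟩
  inv_mem' := by
    rintro f ⟨hf, hf2⟩
    refine ⟨(autOrbital L M).inv_mem hf, fun n x => ?_⟩
    obtain ⟨a, ha⟩ := hf2 n (⇑(f⁻¹) ∘ x)
    refine ⟨a⁻¹, fun i => ?_⟩
    have hi := ha i
    simp only [Function.comp_apply, Equiv.Perm.coe_inv, Equiv.apply_symm_apply] at hi
    rw [← hi, aut_inv_apply, FirstOrder.Language.Equiv.symm_apply_apply]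
    rfl

/-- A homogeneous structure: isomorphisms between finite substructures extend to
automorphisms. -/
def Homogeneous : Prop :=
  ∀ (K K' : Set M), K.Finite → K'.Finite → ∀ p : K ≃ K',
    IsPartialIso L M K K' p → ∃ g : M ≃[L] M, ∀ a : K, g a = (p a : M)

/-- Weak elimination of imaginaries, phrased group-theoretically: every open subgroup is
sandwiched between the pointwise and setwise stabilizers of a unique smallest finite
Galois-algebraically closed set. -/
def HasWEI : Prop :=
  ∀ H : Subgroup (M ≃[L] M), IsOpen (H : Set (M ≃[L] M)) →
    ∃ K : Set M, (K.Finite ∧ aclg L M K = K ∧ pstab L M K ≤ H ∧ H ≤ sstab L M K) ∧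
      ∀ K' : Set M, (K'.Finite ∧ aclg L M K' = K' ∧ pstab L M K' ≤ H ∧ H ≤ sstab L M K') →
        K ⊆ K'

/-- No algebraicity: every finite set is Galois-algebraically closed. -/
def NoAlgebraicity : Prop := ∀ A : Set M, A.Finite → aclg L M A = A

/-- The small index property: every subgroup of index `< 2^ℵ₀` is open. -/
def SIP : Prop :=
  ∀ H : Subgroup (M ≃[L] M), Cardinal.mk ((M ≃[L] M) ⧸ H) < Cardinal.continuum →
    IsOpen (H : Set (M ≃[L] M))

/-- An oligomorphic action: finitely many orbits on `n`-tuples for every `n`. -/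
def Oligo (G : Type*) [Group G] (X : Type*) [MulAction G X] : Prop :=
  ∀ n : ℕ, Finite (MulAction.orbitRel.Quotient G (Fin n → X))

end Paper

namespace Paper

/-- ω-categoricity: `M` is, up to isomorphism, the unique countable model of its complete
first-order theory. -/
def IsOmegaCategorical (L : FirstOrder.Language) (M : Type w) [L.Structure M] : Prop :=
  Countable M ∧ ∀ (N : Type w) (iN : L.Structure N), Countable N → Nonempty N →
    (@FirstOrder.Language.Theory.Model L N iN (L.completeTheory M)) →
      Nonempty (@FirstOrder.Language.Equiv L N M iN _)

end Paper

/-! The maximal `H'` is the setwise stabilizer `G_{K}`. An automorphism normalizing `G_(K)` maps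
`K` into the fixed points of `G_(K)`, hence into `acl(K) = K`, so it stabilizes `K`; and by
homogeneity, restriction `G_{K} → Sym(K)` has kernel `G_(K)` and image exactly `Aut(K)`. Both
directions then amount to transporting the isomorphism `G_{K}/G_(K) ≅ Aut(K)`. -/

section GroupTheory

variable {G X : Type*} [Group G] [MulAction G X]

theorem MulAction.finite_orbit_iff_relIndex_stabilizer_ne_zero (P : Subgroup G) (x : X) :
    (MulAction.orbit P x).Finite ↔ (MulAction.stabilizer G x).relIndex P ≠ 0 := by
  have hstab : (MulAction.stabilizer G x).subgroupOf P = MulAction.stabilizer P x := rfl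
  rw [Subgroup.relIndex, hstab, MulAction.index_stabilizer]
  exact ⟨fun hfin => Set.ncard_ne_zero_of_mem (MulAction.mem_orbit_self x) hfin,
    Set.finite_of_ncard_ne_zero⟩

variable {A B : Type*} [Group A] [Group B]

theorem MonoidHom.exists_surjective_ker_eq_of_range_eq (ρ : G →* B) {e : A →* B}
    (he : Function.Injective e) (hrange : ρ.range = e.range) :
    ∃ ψ : G →* A, Function.Surjective ψ ∧ ψ.ker = ρ.ker := by
  let ρ' : G →* e.range := ρ.codRestrict e.range fun g => hrange ▸ ⟨g, rfl⟩
  refine ⟨(MonoidHom.ofInjective he).symm.toMonoidHom.comp ρ', ?_, ?_⟩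
  · intro a
    obtain ⟨g, hg⟩ : e a ∈ ρ.range := hrange ▸ ⟨a, rfl⟩
    refine ⟨g, ?_⟩
    change (MonoidHom.ofInjective he).symm (ρ' g) = a
    rw [MulEquiv.symm_apply_eq]
    exact Subtype.ext (hg.trans (MonoidHom.ofInjective_apply he).symm)
  · exact (MonoidHom.ker_comp_of_injective _ _ (MulEquiv.injective _)).trans
      (MonoidHom.ker_codRestrict _ _ _)

theorem MonoidHom.exists_injective_range_eq_of_ker_eq {ψ : G →* A}
    (hψ : Function.Surjective ψ) (ρ : G →* B) (hker : ψ.ker = ρ.ker) :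
    ∃ e : A →* B, Function.Injective e ∧ e.range = ρ.range := by
  let e := ψ.liftOfSurjective hψ ⟨ρ, hker.le⟩
  have he : e.comp ψ = ρ := ψ.liftOfRightInverse_comp _ _ _
  refine ⟨e, (injective_iff_map_eq_one e).mpr fun a ha => ?_, ?_⟩
  · obtain ⟨g, rfl⟩ := hψ a
    rw [← MonoidHom.mem_ker, hker, MonoidHom.mem_ker, ← he]
    exact ha
  · rw [← he, MonoidHom.range_comp, MonoidHom.range_eq_top.mpr hψ, ← MonoidHom.range_eq_map]

end GroupTheory

namespace Paper

section

variable {L : FirstOrder.Language} {M : Type*} [L.Structure M]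

theorem mem_aclg_of_forall_mem_pstab {A : Set M} {b : M}
    (hb : ∀ g ∈ pstab L M A, g b = b) : b ∈ aclg L M A :=
  (Set.finite_singleton b).subset fun _ ⟨g, hg⟩ => hg ▸ hb g g.2

theorem subset_aclg (A : Set M) : A ⊆ aclg L M A :=
  fun a ha => mem_aclg_of_forall_mem_pstab fun _ hg => hg a ha

theorem pstab_eq_iInf_stabilizer (A : Set M) :
    pstab L M A = ⨅ a : A, MulAction.stabilizer (M ≃[L] M) (a : M) := by
  ext g
  simp only [Subgroup.mem_iInf, MulAction.mem_stabilizer_iff, aut_smul_def, Subtype.forall]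
  rfl

theorem mem_aclg_iff_relIndex_ne_zero {A : Set M} {b : M} :
    b ∈ aclg L M A ↔ (MulAction.stabilizer (M ≃[L] M) b).relIndex (pstab L M A) ≠ 0 :=
  MulAction.finite_orbit_iff_relIndex_stabilizer_ne_zero _ b

/-- Finitely many points of finite orbit have a common stabilizer of finite index. -/
theorem aclg_aclg {A : Set M} (hA : (aclg L M A).Finite) :
    aclg L M (aclg L M A) = aclg L M A := by
  refine (Set.Subset.antisymm (fun b hb => ?_) (subset_aclg _))
  have : Finite (aclg L M A) := hA.to_subtype
  have hidx : (pstab L M (aclg L M A)).relIndex (pstab L M A) ≠ 0 := by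
    rw [pstab_eq_iInf_stabilizer]
    exact Subgroup.relIndex_iInf_ne_zero fun a => mem_aclg_iff_relIndex_ne_zero.mp a.2
  exact mem_aclg_iff_relIndex_ne_zero.mpr
    (Subgroup.relIndex_ne_zero_trans (mem_aclg_iff_relIndex_ne_zero.mp hb) hidx)

theorem HypH.finite_of_mem_AA (h : HypH L M) {K : Set M} (hK : K ∈ AA L M) : K.Finite := by
  obtain ⟨A, hA, rfl⟩ := hK
  exact h.locallyFinite A hA

theorem HypH.aclg_eq_of_mem_AA (h : HypH L M) {K : Set M} (hK : K ∈ AA L M) :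
    aclg L M K = K := by
  obtain ⟨A, hA, rfl⟩ := hK
  exact aclg_aclg (h.locallyFinite A hA)

theorem funMap_mem_of_aclg_eq {K : Set M} (hKcl : aclg L M K = K) {n : ℕ}
    (F : L.Functions n) (x : Fin n → K) :
    Language.Structure.funMap F (fun i => (x i : M)) ∈ K := by
  have hmem : Language.Structure.funMap F (fun i => (x i : M)) ∈ aclg L M K :=
    mem_aclg_of_forall_mem_pstab fun g hg => by
      rw [Language.Equiv.map_fun]
      exact congrArg _ (funext fun i => hg _ (x i).2)
  rwa [hKcl] at hmem

theorem pstab_le_sstab (A : Set M) : pstab L M A ≤ sstab L M A :=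
  fun _ hg => (Set.image_congr hg).trans (Set.image_id' A)

theorem apply_mem_iff_of_mem_sstab {K : Set M} {g : M ≃[L] M} (hg : g ∈ sstab L M K) (x : M) :
    g x ∈ K ↔ x ∈ K := by
  conv_lhs => rw [← show ⇑g '' K = K from hg]
  exact g.injective.mem_set_image

variable (L) in
def restrictPerm (K : Set M) : sstab L M K →* Equiv.Perm K where
  toFun g := Equiv.Perm.subtypePerm g.1.toEquiv (apply_mem_iff_of_mem_sstab g.2)
  map_one' := rfl
  map_mul' _ _ := rfl

@[simp] theorem restrictPerm_apply (K : Set M) (g : sstab L M K) (a : K) :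
    (restrictPerm L K g a : M) = g.1 a := rfl

theorem ker_restrictPerm (K : Set M) :
    (restrictPerm L K).ker = (pstab L M K).subgroupOf (sstab L M K) := by
  ext g
  simp only [MonoidHom.mem_ker, Subgroup.mem_subgroupOf, Equiv.ext_iff, Subtype.ext_iff,
    restrictPerm_apply, Equiv.Perm.coe_one, id_eq, Subtype.forall]
  rfl

theorem sstab_eq_genStab (K : Set M) :
    sstab L M K = genStab L M K (restrictPerm L K).range := by
  ext f
  constructor
  · exact fun hf => ⟨_, ⟨⟨f, hf⟩, rfl⟩, fun a => rfl⟩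
  · rintro ⟨_, ⟨g, rfl⟩, hfg⟩
    exact (Set.image_congr fun a ha => hfg ⟨a, ha⟩).trans g.2

theorem isPartialIso_restrictPerm {K : Set M} (hKcl : aclg L M K = K) (g : sstab L M K) :
    IsPartialIso L M K K (restrictPerm L K g : K ≃ K) :=
  ⟨fun F x => ⟨funMap_mem_of_aclg_eq hKcl F x, Language.Equiv.map_fun g.1 F _⟩,
    fun r _ => (Language.Equiv.map_rel g.1 r _).symm⟩

theorem HypH.coe_range_restrictPerm (h : HypH L M) {K : Set M} (hKfin : K.Finite)
    (hKcl : aclg L M K = K) :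
    ((restrictPerm L K).range : Set (Equiv.Perm K)) =
      {p : Equiv.Perm K | IsPartialIso L M K K (p : K ≃ K)} := by
  ext p
  constructor
  · rintro ⟨g, rfl⟩
    exact isPartialIso_restrictPerm hKcl g
  · intro hp
    obtain ⟨g, hg⟩ := h.extendsIso K K hKfin hKfin hKcl hKcl p hp
    have hgK : g ∈ sstab L M K := by
      ext x
      constructor
      · rintro ⟨a, ha, rfl⟩
        exact (hg ⟨a, ha⟩).symm ▸ (p ⟨a, ha⟩).2
      · exact fun hx => ⟨_, (p.symm ⟨x, hx⟩).2, (hg _).trans (by simp)⟩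
    exact ⟨⟨g, hgK⟩, Equiv.ext fun a => Subtype.ext (hg a)⟩

theorem sstab_mem_GS {K : Set M} (hK : K ∈ AA L M) (hKcl : aclg L M K = K) :
    sstab L M K ∈ GS L M :=
  ⟨K, hK, (restrictPerm L K).range, fun _ ⟨g, hg⟩ => hg ▸ isPartialIso_restrictPerm hKcl g,
    sstab_eq_genStab K⟩

theorem normal_pstab_subgroupOf_sstab (K : Set M) :
    ((pstab L M K).subgroupOf (sstab L M K)).Normal :=
  ker_restrictPerm (L := L) K ▸ MonoidHom.normal_ker _

theorem relIndex_pstab_sstab_ne_zero {K : Set M} (hKfin : K.Finite) :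
    (pstab L M K).relIndex (sstab L M K) ≠ 0 := by
  have : Finite K := hKfin.to_subtype
  rw [Subgroup.relIndex, ← ker_restrictPerm, Subgroup.index_ker]
  exact Nat.card_pos.ne'

theorem le_sstab_of_normal {K : Set M} (hKfin : K.Finite) (hKcl : aclg L M K = K)
    {H : Subgroup (M ≃[L] M)} (hle : pstab L M K ≤ H)
    (hn : ((pstab L M K).subgroupOf H).Normal) :
    H ≤ sstab L M K := by
  intro f hf
  have hnorm := (Subgroup.normal_subgroupOf_iff_le_normalizer hle).mp hn hf
  have hsub : ⇑f '' K ⊆ K := by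
    rintro _ ⟨a, ha, rfl⟩
    rw [← hKcl]
    refine mem_aclg_of_forall_mem_pstab fun g hg => ?_
    have hconj := (Subgroup.mem_normalizer_iff''.mp hnorm g).mp hg a ha
    rw [aut_mul_apply, aut_mul_apply, aut_inv_apply] at hconj
    simpa using congrArg f hconj
  exact Set.eq_of_subset_of_ncard_le hsub (Set.ncard_image_of_injective K f.injective).ge hKfin

end

theorem stmt_13_general (L : FirstOrder.Language) (M : Type*) [L.Structure M] (h : HypH L M)
    (L₀ : Type*) [Group L₀]
    (H : Subgroup (M ≃[L] M)) (hH : H ∈ PS L M) :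
    (∃ K ∈ AA L M, H = pstab L M K ∧
      ∃ e : L₀ →* Equiv.Perm K, Function.Injective e ∧
        (e.range : Set (Equiv.Perm K)) =
          {p : Equiv.Perm K | IsPartialIso L M K K (p : K ≃ K)}) ↔
    (∃ H' ∈ GS L M, H ≤ H' ∧ (H.subgroupOf H').Normal ∧ H.relIndex H' ≠ 0 ∧
      (∀ H'' ∈ GS L M, H ≤ H'' → (H.subgroupOf H'').Normal → H.relIndex H'' ≠ 0 →
        H' ≤ H'' → H'' = H') ∧
      ∃ ψ : ↥H' →* L₀, Function.Surjective ψ ∧ ψ.ker = H.subgroupOf H') := by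
  constructor
  · rintro ⟨K, hK, rfl, e, he, hrange⟩
    have hKfin := h.finite_of_mem_AA hK
    have hKcl := h.aclg_eq_of_mem_AA hK
    obtain ⟨ψ, hψ, hker⟩ := (restrictPerm L K).exists_surjective_ker_eq_of_range_eq he
      (SetLike.coe_injective (by rw [h.coe_range_restrictPerm hKfin hKcl, hrange]))
    refine ⟨sstab L M K, sstab_mem_GS hK hKcl, pstab_le_sstab K,
      normal_pstab_subgroupOf_sstab K, relIndex_pstab_sstab_ne_zero hKfin,
      fun H'' _ hle hn _ hle' => le_antisymm (le_sstab_of_normal hKfin hKcl hle hn) hle',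
      ψ, hψ, hker.trans (ker_restrictPerm K)⟩
  · rintro ⟨H', -, hle, hn, -, hmax, ψ, hψ, hker⟩
    obtain ⟨K, hK, rfl⟩ := hH
    have hKfin := h.finite_of_mem_AA hK
    have hKcl := h.aclg_eq_of_mem_AA hK
    obtain rfl : sstab L M K = H' := hmax _ (sstab_mem_GS hK hKcl) (pstab_le_sstab K)
      (normal_pstab_subgroupOf_sstab K) (relIndex_pstab_sstab_ne_zero hKfin)
      (le_sstab_of_normal hKfin hKcl hle hn)
    obtain ⟨e, he, hrange⟩ := ψ.exists_injective_range_eq_of_ker_eq hψ (restrictPerm L K)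
      (hker.trans (ker_restrictPerm K).symm)
    exact ⟨K, hK, rfl, e, he, by rw [hrange, h.coe_range_restrictPerm hKfin hKcl]⟩

/-- Under Hypothesis (H), for a finite group `L₀` and `H ∈ PS(M)`:
`H = G_(K)` with `Aut(K) ≅ L₀` iff there is `H' ∈ GS(M)` with `H ⊴ H'`, `[H' : H] < ω`,
`H'` maximal in `GS(M)` under these conditions, and `H'/H ≅ L₀`. -/
theorem stmt_13 (L : FirstOrder.Language) (M : Type*) [L.Structure M] (h : HypH L M)
    (L₀ : Type*) [Group L₀] [Finite L₀]
    (H : Subgroup (M ≃[L] M)) (hH : H ∈ PS L M) :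
    (∃ K ∈ AA L M, H = pstab L M K ∧
      ∃ e : L₀ →* Equiv.Perm K, Function.Injective e ∧
        (e.range : Set (Equiv.Perm K)) =
          {p : Equiv.Perm K | IsPartialIso L M K K (p : K ≃ K)}) ↔
    (∃ H' ∈ GS L M, H ≤ H' ∧ (H.subgroupOf H').Normal ∧ H.relIndex H' ≠ 0 ∧
      (∀ H'' ∈ GS L M, H ≤ H'' → (H.subgroupOf H'').Normal → H.relIndex H'' ≠ 0 →
        H' ≤ H'' → H'' = H') ∧
      ∃ ψ : ↥H' →* L₀, Function.Surjective ψ ∧ ψ.ker = H.subgroupOf H') :=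
  stmt_13_general L M h L₀ H hH

end Paper
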